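/- arXiv:2312.05705 — 3 statements merged into one kernel-verified Lean document; each statement's English description precedes it below -/
import Mathlib

section
/- (IKFAC accumulation lemma, part 2) Under the recursion K_t = K_{t−1}(I − (β/2) N_{t−1}) with N_i = K_i^T U_i K_i + λ K_i^T K_i − I symmetric, one has K_t K_t^T = K_0 (I − β Σ_{i=0}^{t−1} N_i) K_0^T + O(β²). -/
/-!
A step multiplies `K_t` by `I - (β/2) N_t`, so as long as `K_t = K₀ + O(β)` the matrix
`N_t`, a continuous function of `K_t`, stays bounded near `β = 0` and `K_{t+1} = K₀ + O(β)` again.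
Since `N_t` is symmetric, `K_{t+1} K_{t+1}ᵀ = K_t (I - (β/2) N_t)² K_tᵀ`, and the error
`E_t = K_t K_tᵀ - K₀ (I - β Σ_{i<t} N_i) K₀ᵀ` satisfies
`E_{t+1} = E_t - β ((K_t - K₀) N_t K_tᵀ + K₀ N_t (K_t - K₀)ᵀ) + (β²/4) K_t N_t² K_tᵀ`,
where both correction terms are `O(β²)`.
-/

open Matrix Finset Asymptotics Filter Topology

attribute [local instance] Matrix.linftyOpNormedAddCommGroup Matrix.linftyOpNormedRing
  Matrix.linftyOpNormedAlgebra

theorem Matrix.isBigO_transpose {α m : Type*} [Fintype m] [DecidableEq m] {l : Filter α}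
    (f : α → Matrix m m ℝ) : (fun x => (f x)ᵀ) =O[l] f :=
  (transposeLinearEquiv m m ℝ ℝ).toLinearMap.toContinuousLinearMap.isBigO_comp (𝕜₂ := ℝ)
    (𝕜₃ := ℝ) f l

theorem Asymptotics.IsBigO.exists_norm_le_mul_sq {E : Type*} [SeminormedAddCommGroup E]
    {f : ℝ → E} (hf : f =O[𝓝 0] fun β => β ^ 2) :
    ∃ C : ℝ, ∃ δ > (0 : ℝ), ∀ β : ℝ, |β| < δ → ‖f β‖ ≤ C * β ^ 2 := by
  obtain ⟨C, hC⟩ := isBigO_iff.1 hf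
  obtain ⟨δ, hδ, hball⟩ := Metric.eventually_nhds_iff.1 hC
  exact ⟨C, δ, hδ, fun β hβ => by simpa using hball (by simpa using hβ)⟩

theorem Matrix.transpose_transpose_mul_mul_add_smul_sub_one {m : Type*} [Fintype m]
    [DecidableEq m] {U : Matrix m m ℝ} (hU : Uᵀ = U) (lam : ℝ) (A : Matrix m m ℝ) :
    (Aᵀ * U * A + lam • (Aᵀ * A) - 1)ᵀ = Aᵀ * U * A + lam • (Aᵀ * A) - 1 := by
  simp [hU, Matrix.mul_assoc]

theorem Matrix.mul_one_sub_smul_mul_transpose_sub {m : Type*} [Fintype m] [DecidableEq m]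
    (A A₀ S M : Matrix m m ℝ) (hM : Mᵀ = M) (β : ℝ) :
    A * (1 - (β / 2) • M) * (A * (1 - (β / 2) • M))ᵀ - A₀ * (1 - β • (S + M)) * A₀ᵀ =
      (A * Aᵀ - A₀ * (1 - β • S) * A₀ᵀ) - β • ((A - A₀) * M * Aᵀ + A₀ * M * (A - A₀)ᵀ)
        + (β ^ 2 / 4) • (A * (M * M) * Aᵀ) := by
  simp only [transpose_mul, transpose_sub, transpose_smul, hM, mul_sub, sub_mul, mul_add, add_mul,
    mul_one, smul_mul_assoc, mul_smul_comm, smul_smul, smul_sub, smul_add, Matrix.mul_assoc]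
  module

section Accumulation

variable {m : Type*} [Fintype m] [DecidableEq m] {K₀ : Matrix m m ℝ}
  {K N : ℝ → ℕ → Matrix m m ℝ} {φ : ℕ → Matrix m m ℝ → Matrix m m ℝ}

theorem isBigO_one_of_isBigO_sub_initial (hN : ∀ β t, N β t = φ t (K β t))
    (hφ : ∀ t, ContinuousAt (φ t) K₀) {t : ℕ}
    (h : (fun β => K β t - K₀) =O[𝓝 0] fun β => β) :
    (fun β => K β t) =O[𝓝 0] (fun _ => (1 : ℝ)) ∧
      (fun β => N β t) =O[𝓝 0] (fun _ => (1 : ℝ)) := by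
  have hK : Tendsto (fun β => K β t) (𝓝 0) (𝓝 K₀) :=
    tendsto_sub_nhds_zero_iff.1 (h.trans_tendsto tendsto_id)
  refine ⟨hK.isBigO_one ℝ, ?_⟩
  simp_rw [hN]
  exact ((hφ t).tendsto.comp hK).isBigO_one ℝ

theorem isBigO_sub_initial (hK0 : ∀ β, K β 0 = K₀)
    (hKrec : ∀ β t, K β (t + 1) = K β t * (1 - (β / 2) • N β t))
    (hN : ∀ β t, N β t = φ t (K β t)) (hφ : ∀ t, ContinuousAt (φ t) K₀) (t : ℕ) :
    (fun β => K β t - K₀) =O[𝓝 0] fun β => β := by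
  induction t with
  | zero => simpa [hK0] using isBigO_zero (fun β : ℝ => β) (𝓝 0)
  | succ t ih =>
    obtain ⟨hKb, hNb⟩ := isBigO_one_of_isBigO_sub_initial hN hφ ih
    have hstep : (fun β => (β / 2) • (K β t * N β t)) =O[𝓝 0] fun β => β := by
      simpa [div_eq_inv_mul] using
        ((isBigO_refl (fun β : ℝ => β) _).const_mul_left (1 / 2)).smul (hKb.mul hNb)
    have hsplit : (fun β => K β (t + 1) - K₀) =
        fun β => (K β t - K₀) - (β / 2) • (K β t * N β t) := by
      funext β
      rw [hKrec, mul_sub, mul_one, mul_smul_comm]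
      abel
    rw [hsplit]
    exact ih.sub hstep

theorem isBigO_mul_transpose_sub_accumulated (hK0 : ∀ β, K β 0 = K₀)
    (hKrec : ∀ β t, K β (t + 1) = K β t * (1 - (β / 2) • N β t))
    (hN : ∀ β t, N β t = φ t (K β t)) (hφ : ∀ t, ContinuousAt (φ t) K₀)
    (hNsym : ∀ β t, (N β t)ᵀ = N β t) (t : ℕ) :
    (fun β => K β t * (K β t)ᵀ - K₀ * (1 - β • ∑ i ∈ range t, N β i) * K₀ᵀ) =O[𝓝 0]
      fun β => β ^ 2 := by
  induction t with
  | zero => simpa [hK0] using isBigO_zero (fun β : ℝ => β ^ 2) (𝓝 0)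
  | succ t ih =>
    have hsub := isBigO_sub_initial hK0 hKrec hN hφ t
    obtain ⟨hKb, hNb⟩ := isBigO_one_of_isBigO_sub_initial hN hφ hsub
    have hKTb := (isBigO_transpose _).trans hKb
    have hcross : (fun β => β • ((K β t - K₀) * N β t * (K β t)ᵀ + K₀ * N β t * (K β t - K₀)ᵀ))
        =O[𝓝 0] fun β => β ^ 2 := by
      have h₁ := (hsub.mul hNb).mul hKTb
      have h₂ := ((isBigO_const_one ℝ K₀ _).mul hNb).mul ((isBigO_transpose _).trans hsub)
      simpa [sq] using (isBigO_refl (fun β : ℝ => β) _).smul (h₁.add (by simpa using h₂))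
    have hquad : (fun β => (β ^ 2 / 4) • (K β t * (N β t * N β t) * (K β t)ᵀ))
        =O[𝓝 0] fun β => β ^ 2 := by
      simpa [div_eq_inv_mul] using
        ((isBigO_refl (fun β : ℝ => β ^ 2) _).const_mul_left (1 / 4)).smul
          ((hKb.mul (hNb.mul hNb)).mul hKTb)
    simp_rw [sum_range_succ, hKrec, mul_one_sub_smul_mul_transpose_sub _ _ _ _ (hNsym _ t)]
    exact (ih.sub hcross).add hquad

end Accumulation

theorem ikfac_accumulation_product_general (n : ℕ) (K₀ : Matrix (Fin n) (Fin n) ℝ)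
    (U : ℕ → Matrix (Fin n) (Fin n) ℝ) (hU : ∀ i, (U i)ᵀ = U i) (lam : ℝ)
    (K : ℝ → ℕ → Matrix (Fin n) (Fin n) ℝ)
    (N : ℝ → ℕ → Matrix (Fin n) (Fin n) ℝ)
    (hK0 : ∀ β, K β 0 = K₀)
    (hN : ∀ β i, N β i = (K β i)ᵀ * U i * K β i + lam • ((K β i)ᵀ * K β i) - 1)
    (hKrec : ∀ β t, K β (t + 1) = K β t * (1 - (β / 2) • N β t)) :
    ∀ t : ℕ, ∃ C : ℝ, ∃ δ > (0 : ℝ), ∀ β : ℝ, |β| < δ →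
      ‖K β t * (K β t)ᵀ -
        K₀ * (1 - β • ∑ i ∈ Finset.range t, N β i) * K₀ᵀ‖ ≤ C * β ^ 2 := by
  have hφ (i : ℕ) : ContinuousAt (fun A => Aᵀ * U i * A + lam • (Aᵀ * A) - 1) K₀ := by
    fun_prop
  have hNsym (β : ℝ) (i : ℕ) : (N β i)ᵀ = N β i := by
    rw [hN]
    exact transpose_transpose_mul_mul_add_smul_sub_one (hU i) lam _
  intro t
  exact (isBigO_mul_transpose_sub_accumulated hK0 hKrec hN hφ hNsym t).exists_norm_le_mul_sq

/-- IKFAC accumulation lemma, part 2: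
`K_t K_tᵀ = K₀ (I − β Σ_{i<t} N_i) K₀ᵀ + O(β²)` for each fixed `t`. -/
theorem ikfac_accumulation_product (n : ℕ) (K₀ : Matrix (Fin n) (Fin n) ℝ)
    (hK₀ : IsUnit K₀.det)
    (U : ℕ → Matrix (Fin n) (Fin n) ℝ) (hU : ∀ i, (U i)ᵀ = U i) (lam : ℝ) (hlam : 0 ≤ lam)
    (K : ℝ → ℕ → Matrix (Fin n) (Fin n) ℝ)
    (N : ℝ → ℕ → Matrix (Fin n) (Fin n) ℝ)
    (hK0 : ∀ β, K β 0 = K₀)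
    (hN : ∀ β i, N β i = (K β i)ᵀ * U i * K β i + lam • ((K β i)ᵀ * K β i) - 1)
    (hKrec : ∀ β t, K β (t + 1) = K β t * (1 - (β / 2) • N β t)) :
    ∀ t : ℕ, ∃ C : ℝ, ∃ δ > (0 : ℝ), ∀ β : ℝ, |β| < δ →
      ‖K β t * (K β t)ᵀ -
        K₀ * (1 - β • ∑ i ∈ Finset.range t, N β i) * K₀ᵀ‖ ≤ C * β ^ 2 :=
  ikfac_accumulation_product_general n K₀ U hU lam K N hK0 hN hKrec
end

section
/- (Consistency of curvature terms) With the KFAC recursion's N̂_i = K_0^T U_i K_0 + λ K_0^T K_0 − I and the IKFAC recursion's N_i = K_i^T U_i K_i + λ K_i^T K_i − I, where both use the same initialization K_0 and the same symmetric curvature matrices U_i, one has N_i = N̂_i + O(β) for every fixed i. -/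
open Matrix
attribute [local instance] Matrix.linftyOpNormedAddCommGroup Matrix.linftyOpNormedRing
  Matrix.linftyOpNormedAlgebra

/-!
At step size `β = 0` the IKFAC recursion is stationary, so `K 0 i = K₀` and `N 0 i = N̂ i`.
Each `K β i`, and hence each `N β i`, is built from `K₀` by finitely many sums, products,
transposes and scalings by `β`, so it is differentiable in `β`; a function differentiable at
`0` differs from its value there by `O(β)`.
-/

theorem Differentiable.matrix_transpose_linfty {E ι : Type*} [NormedAddCommGroup E]
    [NormedSpace ℝ E] [Fintype ι] [DecidableEq ι] {f : E → Matrix ι ι ℝ}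
    (hf : Differentiable ℝ f) : Differentiable ℝ fun x => (f x)ᵀ :=
  (LinearMap.toContinuousLinearMap (transposeLinearEquiv ι ι ℝ ℝ).toLinearMap).differentiable.comp
    hf

theorem DifferentiableAt.exists_norm_sub_le_mul_abs {E : Type*} [NormedAddCommGroup E]
    [NormedSpace ℝ E] {f : ℝ → E} (hf : DifferentiableAt ℝ f 0) :
    ∃ C : ℝ, ∃ δ > (0 : ℝ), ∀ β : ℝ, |β| < δ → ‖f β - f 0‖ ≤ C * |β| := by
  obtain ⟨C, hC⟩ := Asymptotics.isBigO_iff.1 hf.isBigO_sub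
  obtain ⟨δ, hδ, hbound⟩ := Metric.eventually_nhds_iff.1 hC
  exact ⟨C, δ, hδ, fun β hβ => by simpa using hbound (by simpa using hβ)⟩

section IKFAC

variable {ι : Type*} [Fintype ι] [DecidableEq ι] {K₀ : Matrix ι ι ℝ} {U : ℕ → Matrix ι ι ℝ}
  {lam : ℝ} {K N : ℝ → ℕ → Matrix ι ι ℝ}

theorem ikfac_iterate_zero_stepSize (hK0 : ∀ β, K β 0 = K₀)
    (hKrec : ∀ β t, K β (t + 1) = K β t * (1 - (β / 2) • N β t)) (t : ℕ) : K 0 t = K₀ := by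
  induction t with
  | zero => exact hK0 0
  | succ t ih => simp [hKrec, ih]

theorem ikfac_curvature_differentiable
    (hN : ∀ β i, N β i = (K β i)ᵀ * U i * K β i + lam • ((K β i)ᵀ * K β i) - 1) {t : ℕ}
    (hK : Differentiable ℝ fun β => K β t) : Differentiable ℝ fun β => N β t := by
  simp only [hN]
  have hKT_diff := hK.matrix_transpose_linfty
  fun_prop

theorem ikfac_iterate_differentiable (hK0 : ∀ β, K β 0 = K₀)
    (hN : ∀ β i, N β i = (K β i)ᵀ * U i * K β i + lam • ((K β i)ᵀ * K β i) - 1)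
    (hKrec : ∀ β t, K β (t + 1) = K β t * (1 - (β / 2) • N β t)) (t : ℕ) :
    Differentiable ℝ fun β => K β t := by
  induction t with
  | zero => simp only [hK0]; fun_prop
  | succ t ih =>
    simp only [hKrec]
    have hN_diff := ikfac_curvature_differentiable hN ih
    fun_prop

end IKFAC

theorem ikfac_kfac_curvature_consistency_general (n : ℕ) (K₀ : Matrix (Fin n) (Fin n) ℝ)
    (U : ℕ → Matrix (Fin n) (Fin n) ℝ) (lam : ℝ)
    (K : ℝ → ℕ → Matrix (Fin n) (Fin n) ℝ)
    (N : ℝ → ℕ → Matrix (Fin n) (Fin n) ℝ)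
    (Nhat : ℕ → Matrix (Fin n) (Fin n) ℝ)
    (hK0 : ∀ β, K β 0 = K₀)
    (hN : ∀ β i, N β i = (K β i)ᵀ * U i * K β i + lam • ((K β i)ᵀ * K β i) - 1)
    (hKrec : ∀ β t, K β (t + 1) = K β t * (1 - (β / 2) • N β t))
    (hNhat : ∀ i, Nhat i = K₀ᵀ * U i * K₀ + lam • (K₀ᵀ * K₀) - 1) :
    ∀ i : ℕ, ∃ C : ℝ, ∃ δ > (0 : ℝ), ∀ β : ℝ, |β| < δ →
      ‖N β i - Nhat i‖ ≤ C * |β| := by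
  intro i
  have hNhat_eq : Nhat i = N 0 i := by rw [hNhat, hN, ikfac_iterate_zero_stepSize hK0 hKrec]
  rw [hNhat_eq]
  exact (ikfac_curvature_differentiable hN
    (ikfac_iterate_differentiable hK0 hN hKrec i) 0).exists_norm_sub_le_mul_abs

/-- Consistency of curvature terms: `N_i = N̂_i + O(β)` for every fixed `i`. -/
theorem ikfac_kfac_curvature_consistency (n : ℕ) (K₀ : Matrix (Fin n) (Fin n) ℝ)
    (hK₀ : IsUnit K₀.det)
    (U : ℕ → Matrix (Fin n) (Fin n) ℝ) (hU : ∀ i, (U i)ᵀ = U i) (lam : ℝ) (hlam : 0 ≤ lam)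
    (K : ℝ → ℕ → Matrix (Fin n) (Fin n) ℝ)
    (N : ℝ → ℕ → Matrix (Fin n) (Fin n) ℝ)
    (Nhat : ℕ → Matrix (Fin n) (Fin n) ℝ)
    (hK0 : ∀ β, K β 0 = K₀)
    (hN : ∀ β i, N β i = (K β i)ᵀ * U i * K β i + lam • ((K β i)ᵀ * K β i) - 1)
    (hKrec : ∀ β t, K β (t + 1) = K β t * (1 - (β / 2) • N β t))
    (hNhat : ∀ i, Nhat i = K₀ᵀ * U i * K₀ + lam • (K₀ᵀ * K₀) - 1) :
    ∀ i : ℕ, ∃ C : ℝ, ∃ δ > (0 : ℝ), ∀ β : ℝ, |β| < δ →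
      ‖N β i - Nhat i‖ ≤ C * |β| :=
  ikfac_kfac_curvature_consistency_general n K₀ U lam K N Nhat hK0 hN hKrec hNhat
end

section
/- (Theorem: IKFAC has first-order accuracy of KFAC) Let S̄_t = (1−β) S̄_{t−1} + β(U_{t−1} + λI) with S̄_0 = K_0^{-T} K_0^{-1}, and let K_t = K_{t−1}(I − (β/2)(K_{t−1}^T U_{t−1} K_{t−1} + λ K_{t−1}^T K_{t−1} − I)), with the same invertible K_0 and the same symmetric matrices U_i in both recursions. Then for every fixed t, K_t K_t^T · S̄_t = I + O(β²), i.e., K_t K_t^T = (S̄_t)^{-1} + O(β²). -/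
/-!
Write `W_t = U_t + λ I` for the damped curvature, `G_t = K_t K_tᵀ` and `E_t = G_t S̄_t - I`.
Since `K_tᵀ W_t K_t - I` is symmetric, one IKFAC step and one KFAC step combine into the exact
identity `E_{t+1} = (I - β G_t W_t) E_t + β² R_t`: substituting `G_t S̄_t = I + E_t` makes the
first-order terms cancel. All iterates are polynomial, hence continuous, in `β`, so
`I - β G_t W_t` and `R_t` stay bounded near `β = 0`, and `E_t = O(β²)` follows by induction
from `E_0 = 0`.
-/

open Matrix Finset

attribute [local instance] Matrix.linftyOpNormedAddCommGroup Matrix.linftyOpNormedRing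
  Matrix.linftyOpNormedAlgebra

open Asymptotics Filter Topology

theorem continuous_of_recursion {X Y : Type*} [TopologicalSpace X] [TopologicalSpace Y]
    {f : X → ℕ → Y} {F : ℕ → X → Y → Y} (hF : ∀ t, Continuous fun p : X × Y => F t p.1 p.2)
    (h0 : Continuous fun x => f x 0) (hrec : ∀ x t, f x (t + 1) = F t x (f x t)) (t : ℕ) :
    Continuous fun x => f x t := by
  induction t with
  | zero => exact h0
  | succ t ih =>
    simp_rw [hrec]
    exact (hF t).comp (continuous_id.prodMk ih)

theorem isBigO_mul_add_smul {α A : Type*} [SeminormedRing A] [NormedSpace ℝ A] {l : Filter α}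
    {g : α → ℝ} {M E R : α → A} (hM : M =O[l] (fun _ => (1 : ℝ))) (hE : E =O[l] g)
    (hR : R =O[l] (fun _ => (1 : ℝ))) : (fun x => M x * E x + g x • R x) =O[l] g := by
  have hME : (fun x => M x * E x) =O[l] g := by simpa using hM.mul hE
  have hgR : (fun x => g x • R x) =O[l] g := by simpa using (isBigO_refl g l).smul hR
  exact hME.add hgR

theorem Matrix.mul_transpose_mul_inv_transpose_mul_inv {n R : Type*} [Fintype n] [DecidableEq n]
    [CommRing R] {K : Matrix n n R} (hK : IsUnit K.det) : K * Kᵀ * ((K⁻¹)ᵀ * K⁻¹) = 1 := by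
  rw [transpose_nonsing_inv, ← mul_inv_rev, mul_nonsing_inv]
  simpa [det_transpose] using hK.mul (isUnit_det_transpose K hK)

section Step

variable {𝕜 n : Type*} [Field 𝕜]

def kfacStep (β : 𝕜) (W S : Matrix n n 𝕜) : Matrix n n 𝕜 := (1 - β) • S + β • W

theorem continuous_kfacStep (W : Matrix n n ℝ) :
    Continuous fun p : ℝ × Matrix n n ℝ => kfacStep p.1 W p.2 := by
  unfold kfacStep; fun_prop

variable [Fintype n] [DecidableEq n]

def ikfacResidual (W K : Matrix n n 𝕜) : Matrix n n 𝕜 := Kᵀ * W * K - 1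

def ikfacStep (β : 𝕜) (W K : Matrix n n 𝕜) : Matrix n n 𝕜 :=
  K * (1 - (β / 2) • ikfacResidual W K)

theorem continuous_ikfacStep (W : Matrix n n ℝ) :
    Continuous fun p : ℝ × Matrix n n ℝ => ikfacStep p.1 W p.2 := by
  unfold ikfacStep ikfacResidual; fun_prop

theorem ikfacResidual_transpose {W : Matrix n n 𝕜} (hW : Wᵀ = W) (K : Matrix n n 𝕜) :
    (ikfacResidual W K)ᵀ = ikfacResidual W K := by
  simp [ikfacResidual, transpose_mul, hW, Matrix.mul_assoc]

theorem ikfacStep_mul_transpose_mul_kfacStep_sub_one [CharZero 𝕜] (β : 𝕜) {W : Matrix n n 𝕜}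
    (hW : Wᵀ = W) (K S : Matrix n n 𝕜) :
    ikfacStep β W K * (ikfacStep β W K)ᵀ * kfacStep β W S - 1 =
      (1 - β • (K * Kᵀ * W)) * (K * Kᵀ * S - 1) +
        β ^ 2 • ((4 : 𝕜)⁻¹ • (K * ikfacResidual W K ^ 2 * Kᵀ * kfacStep β W S) -
          K * ikfacResidual W K * Kᵀ * (W - S)) := by
  rw [ikfacStep, transpose_mul, transpose_sub, transpose_one, transpose_smul,
    ikfacResidual_transpose hW]
  simp only [kfacStep, ikfacResidual, pow_two]
  simp only [mul_sub, sub_mul, mul_add, smul_mul_assoc, mul_smul_comm, mul_one, one_mul,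
    Matrix.mul_assoc, smul_sub, smul_add, smul_smul]
  module

theorem isBigO_ikfac_mul_transpose_mul_kfac_sub_one {W : ℕ → Matrix n n ℝ}
    (hW : ∀ t, (W t)ᵀ = W t) {K S : ℝ → ℕ → Matrix n n ℝ}
    (hKc : ∀ t, Continuous fun β => K β t) (hSc : ∀ t, Continuous fun β => S β t)
    (h0 : ∀ β, K β 0 * (K β 0)ᵀ * S β 0 = 1)
    (hK : ∀ β t, K β (t + 1) = ikfacStep β (W t) (K β t))
    (hS : ∀ β t, S β (t + 1) = kfacStep β (W t) (S β t)) (t : ℕ) :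
    (fun β => K β t * (K β t)ᵀ * S β t - 1) =O[𝓝 0] fun β => β ^ 2 := by
  induction t with
  | zero => simpa [h0] using isBigO_zero _ _
  | succ t ih =>
    simp_rw [hK, hS, ikfacStep_mul_transpose_mul_kfacStep_sub_one _ (hW t), kfacStep,
      ikfacResidual]
    have hKt := hKc t
    have hSt := hSc t
    refine isBigO_mul_add_smul ?_ ih ?_ <;>
      exact (Continuous.tendsto (by fun_prop) 0).isBigO_one ℝ

end Step

theorem ikfac_first_order_accuracy_of_kfac_general (n : ℕ) (K₀ : Matrix (Fin n) (Fin n) ℝ)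
    (hK₀ : IsUnit K₀.det)
    (U : ℕ → Matrix (Fin n) (Fin n) ℝ) (hUsym : ∀ i, (U i)ᵀ = U i)
    (lam : ℝ)
    (Sbar : ℝ → ℕ → Matrix (Fin n) (Fin n) ℝ)
    (hS0 : ∀ β, Sbar β 0 = (K₀⁻¹)ᵀ * K₀⁻¹)
    (hSrec : ∀ β t, Sbar β (t + 1) = (1 - β) • Sbar β t + β • (U t + lam • 1))
    (K : ℝ → ℕ → Matrix (Fin n) (Fin n) ℝ)
    (hK0 : ∀ β, K β 0 = K₀)
    (hKrec : ∀ β t, K β (t + 1) =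
      K β t * (1 - (β / 2) •
        ((K β t)ᵀ * U t * K β t + lam • ((K β t)ᵀ * K β t) - 1))) :
    ∀ t : ℕ, ∃ C : ℝ, ∃ δ > (0 : ℝ), ∀ β : ℝ, 0 < β → β < 1 → |β| < δ →
      ‖K β t * (K β t)ᵀ * Sbar β t - 1‖ ≤ C * β ^ 2 := by
  intro t
  have hW : ∀ t, (U t + lam • 1)ᵀ = U t + lam • 1 := fun t => by simp [hUsym]
  have hK : ∀ β t, K β (t + 1) = ikfacStep β (U t + lam • 1) (K β t) := fun β t => by
    simp [hKrec, ikfacStep, ikfacResidual, Matrix.mul_add, Matrix.add_mul]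
  have hS : ∀ β t, Sbar β (t + 1) = kfacStep β (U t + lam • 1) (Sbar β t) := hSrec
  have hKc := continuous_of_recursion (f := K) (fun t => continuous_ikfacStep (U t + lam • 1))
    (by simp only [hK0]; exact continuous_const) hK
  have hSc := continuous_of_recursion (f := Sbar) (fun t => continuous_kfacStep (U t + lam • 1))
    (by simp only [hS0]; exact continuous_const) hS
  obtain ⟨C, hC⟩ := (isBigO_ikfac_mul_transpose_mul_kfac_sub_one hW hKc hSc
    (fun β => by rw [hK0, hS0, mul_transpose_mul_inv_transpose_mul_inv hK₀]) hK hS t).bound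
  obtain ⟨δ, hδ, hball⟩ := Metric.eventually_nhds_iff.1 hC
  exact ⟨C, δ, hδ, fun β _ _ hβ => by simpa using hball (by simpa using hβ)⟩

/-- IKFAC has first-order accuracy of KFAC:
`K_t K_tᵀ · S̄_t = I + O(β²)` for every fixed `t`. -/
theorem ikfac_first_order_accuracy_of_kfac (n : ℕ) (K₀ : Matrix (Fin n) (Fin n) ℝ)
    (hK₀ : IsUnit K₀.det)
    (U : ℕ → Matrix (Fin n) (Fin n) ℝ) (hUsym : ∀ i, (U i)ᵀ = U i)
    (hUpsd : ∀ i, (U i).PosSemidef) (lam : ℝ) (hlam : 0 < lam)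
    (Sbar : ℝ → ℕ → Matrix (Fin n) (Fin n) ℝ)
    (hS0 : ∀ β, Sbar β 0 = (K₀⁻¹)ᵀ * K₀⁻¹)
    (hSrec : ∀ β t, Sbar β (t + 1) = (1 - β) • Sbar β t + β • (U t + lam • 1))
    (K : ℝ → ℕ → Matrix (Fin n) (Fin n) ℝ)
    (hK0 : ∀ β, K β 0 = K₀)
    (hKrec : ∀ β t, K β (t + 1) =
      K β t * (1 - (β / 2) •
        ((K β t)ᵀ * U t * K β t + lam • ((K β t)ᵀ * K β t) - 1))) :
    ∀ t : ℕ, ∃ C : ℝ, ∃ δ > (0 : ℝ), ∀ β : ℝ, 0 < β → β < 1 → |β| < δ →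
      ‖K β t * (K β t)ᵀ * Sbar β t - 1‖ ≤ C * β ^ 2 :=
  ikfac_first_order_accuracy_of_kfac_general n K₀ hK₀ U hUsym lam Sbar hS0 hSrec K hK0 hKrec
end
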